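/- arXiv:2106.05930 — 5 statements merged into one kernel-verified Lean document; each statement's English description precedes it below -/
import Mathlib

section
/- Let G and H be finite simple graphs, each with more than one vertex, and suppose both have a spherical dimension. If there exist a unit-distance embedding of G in ℝ^{sdim G} whose image lies on a sphere of radius r₁ with 0 < r₁ < 1 and a unit-distance embedding of H in ℝ^{sdim H} whose image lies on a sphere of radius r₂ with 0 < r₂ < 1 such that r₁² + r₂² = 1, then dim(G + H) = sdim G + sdim H. If no such pair of embeddings exists, then dim(G + H) > sdim G + sdim H. -/
/-- A unit-distance embedding of a simple graph `G` in `ℝⁿ`: an injective map sending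
adjacent vertices to points at distance 1, such that no other vertex lies on the
closed segment between the endpoints of an edge. -/
def IsUDEmbedding {V : Type*} (G : SimpleGraph V) {n : ℕ}
    (f : V → EuclideanSpace ℝ (Fin n)) : Prop :=
  Function.Injective f ∧
  (∀ ⦃u v⦄, G.Adj u v → dist (f u) (f v) = 1) ∧
  (∀ ⦃u v⦄, G.Adj u v → ∀ w, w ≠ u → w ≠ v → f w ∉ segment ℝ (f u) (f v))

/-- `G` has a unit-distance embedding in `ℝⁿ`. -/
def HasUDEmbedding {V : Type*} (G : SimpleGraph V) (n : ℕ) : Prop :=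
  ∃ f : V → EuclideanSpace ℝ (Fin n), IsUDEmbedding G f

/-- `G` has a unit-distance embedding in `ℝⁿ` whose image lies on a sphere of radius `r`. -/
def HasSphericalEmbeddingRadius {V : Type*} (G : SimpleGraph V) (n : ℕ) (r : ℝ) : Prop :=
  ∃ f : V → EuclideanSpace ℝ (Fin n), IsUDEmbedding G f ∧
    ∃ c : EuclideanSpace ℝ (Fin n), ∀ v, dist (f v) c = r

/-- `G` has a unit-distance embedding in `ℝⁿ` whose image lies on a sphere
of radius `0 < r < 1`. -/
def HasSphericalEmbedding {V : Type*} (G : SimpleGraph V) (n : ℕ) : Prop :=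
  ∃ r : ℝ, 0 < r ∧ r < 1 ∧ HasSphericalEmbeddingRadius G n r

/-- The dimension of a graph: the least `n` such that `G` has a unit-distance
embedding in `ℝⁿ`. -/
noncomputable def graphDim {V : Type*} (G : SimpleGraph V) : ℕ :=
  sInf {n | HasUDEmbedding G n}

/-- The spherical dimension of a graph: the least `n` such that `G` has a unit-distance
embedding in `ℝⁿ` on a sphere of radius strictly between 0 and 1.  By convention the
spherical dimension of a graph with at most one vertex is `0`. -/
noncomputable def sphericalDim {V : Type*} [Fintype V] (G : SimpleGraph V) : ℕ :=
  if Fintype.card V ≤ 1 then 0 else sInf {n | HasSphericalEmbedding G n}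

/-- The join `G + H` of two graphs: disjoint union together with all edges between them. -/
def graphJoin {V W : Type*} (G : SimpleGraph V) (H : SimpleGraph W) :
    SimpleGraph (V ⊕ W) :=
  SimpleGraph.fromRel (fun x y =>
    match x, y with
    | Sum.inl a, Sum.inl b => G.Adj a b
    | Sum.inr a, Sum.inr b => H.Adj a b
    | Sum.inl _, Sum.inr _ => True
    | Sum.inr _, Sum.inl _ => False)

/-- `H` is a minor of `G` (branch-set formulation, equivalent to being obtainable from `G`
by vertex deletions, edge deletions and edge contractions). -/
def IsMinorOf {W V : Type*} (H : SimpleGraph W) (G : SimpleGraph V) : Prop :=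
  ∃ φ : W → Set V,
    (∀ w, (SimpleGraph.induce (φ w) G).Connected) ∧
    (Pairwise fun w w' => Disjoint (φ w) (φ w')) ∧
    (∀ ⦃w w'⦄, H.Adj w w' → ∃ x ∈ φ w, ∃ y ∈ φ w', G.Adj x y)

/-- `H` is a proper minor of `G`: a minor that is not isomorphic to `G`. -/
def IsProperMinorOf {W V : Type*} (H : SimpleGraph W) (G : SimpleGraph V) : Prop :=
  IsMinorOf H G ∧ ¬ Nonempty (H ≃g G)

/-- `G` is minor minimal with respect to dimension `n`. -/
def MinorMinimalDim {V : Type*} (G : SimpleGraph V) (n : ℕ) : Prop :=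
  graphDim G = n ∧
  ∀ (W : Type) [Fintype W] (H : SimpleGraph W), Nonempty W →
    IsProperMinorOf H G → graphDim H < n

/-- `G` is minor minimal with respect to spherical dimension `n`. -/
def MinorMinimalSDim {V : Type*} [Fintype V] (G : SimpleGraph V) (n : ℕ) : Prop :=
  sphericalDim G = n ∧
  ∀ (W : Type) [Fintype W] (H : SimpleGraph W), Nonempty W →
    IsProperMinorOf H G → sphericalDim H < n

/-- The vertex type of the graph `Sₙ`. -/
def SType : ℕ → Type
  | 0 => Fin 0
  | 1 => Fin 1
  | 2 => Fin 2
  | 3 => Fin 3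
  | (n + 4) => Fin (n + 1) ⊕ Fin 3

instance : (n : ℕ) → Fintype (SType n)
  | 0 => inferInstanceAs (Fintype (Fin 0))
  | 1 => inferInstanceAs (Fintype (Fin 1))
  | 2 => inferInstanceAs (Fintype (Fin 2))
  | 3 => inferInstanceAs (Fintype (Fin 3))
  | (n + 4) => inferInstanceAs (Fintype (Fin (n + 1) ⊕ Fin 3))

/-- The graph `Sₙ`:  `S₁ = ε₁`, `S₂ = ε₂`, `S₃ = ε₃`, and `Sₙ = K_{n-3} + ε₃` for `n ≥ 4`. -/
def SGraph : (n : ℕ) → SimpleGraph (SType n)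
  | 0 => ⊥
  | 1 => ⊥
  | 2 => ⊥
  | 3 => ⊥
  | (n + 4) => graphJoin (⊤ : SimpleGraph (Fin (n + 1))) (⊥ : SimpleGraph (Fin 3))


/-!
In a unit-distance embedding of `G + H` every vertex of `G` is at distance `1` from every vertex
of `H`. Hence the direction spaces `U`, `U'` of the affine spans of the two parts are orthogonal,
and two applications of Pythagoras put the two parts on spheres of radii `r₁`, `r₂` in their
affine spans with `r₁² + d² + r₂² = 1`, where `d` is the distance between the centres. If
`dim U + dim U'` is the whole dimension then `d = 0`, so `r₁² + r₂² = 1`.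

Conversely, spherical embeddings with `r₁² + r₂² = 1`, centred at the origin of two orthogonal
factors, combine into an embedding of `G + H` in `ℝ^(m+k)`. A scaled orthonormal family shows
that every finite graph has a unit-distance embedding, so `dim (G + H)` is attained.
-/

open Set Module EuclideanGeometry

variable {V W E F : Type*}

section UnitDistance

variable [NormedAddCommGroup E] [NormedSpace ℝ E] [NormedAddCommGroup F] [NormedSpace ℝ F]
  {G : SimpleGraph V} {f : V → E}

/-- `IsUDEmbedding` is the case `E = EuclideanSpace ℝ (Fin n)`, definitionally. -/
def IsUnitDistanceEmbedding (G : SimpleGraph V) (f : V → E) : Prop :=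
  Function.Injective f ∧
  (∀ ⦃u v⦄, G.Adj u v → dist (f u) (f v) = 1) ∧
  (∀ ⦃u v⦄, G.Adj u v → ∀ w, w ≠ u → w ≠ v → f w ∉ segment ℝ (f u) (f v))

theorem isUnitDistanceEmbedding_affineIsometry_comp_iff (Φ : E →ᵃⁱ[ℝ] F) :
    IsUnitDistanceEmbedding G (Φ ∘ f) ↔ IsUnitDistanceEmbedding G f := by
  have hseg : ∀ x y z : E, Φ z ∈ segment ℝ (Φ x) (Φ y) ↔ z ∈ segment ℝ x y := fun x y z => by
    simpa only [mem_segment_iff_wbtw, AffineIsometry.coe_toAffineMap] using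
      Φ.injective.wbtw_map_iff (f := Φ.toAffineMap)
  simp only [IsUnitDistanceEmbedding, Φ.injective.of_comp_iff, Function.comp_apply, Φ.dist_map,
    hseg]

theorem IsUnitDistanceEmbedding.sub_const (hf : IsUnitDistanceEmbedding G f) (c : E) :
    IsUnitDistanceEmbedding G fun v => f v - c :=
  (isUnitDistanceEmbedding_affineIsometry_comp_iff
    (AffineIsometryEquiv.vaddConst ℝ c).symm.toAffineIsometry).2 hf

theorem notMem_segment_of_dist_eq [StrictConvexSpace ℝ E] {x y z c : E} {r : ℝ}
    (hx : dist x c = r) (hy : dist y c = r) (hz : dist z c = r) (hzx : z ≠ x) (hzy : z ≠ y) :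
    z ∉ segment ℝ x y := fun h => by
  have := Sbtw.dist_lt_max_dist c ⟨mem_segment_iff_wbtw.1 h, hzx, hzy⟩
  simp [hx, hy, hz] at this

theorem isUnitDistanceEmbedding_of_map_mem_sphere [StrictConvexSpace ℝ F]
    (hf : Function.Injective f) (hdist : ∀ ⦃u v⦄, G.Adj u v → dist (f u) (f v) = 1)
    (L : E →ᵃ[ℝ] F) (hL : Function.Injective L) (c : F) (r : ℝ)
    (hr : ∀ v, L (f v) ∈ Metric.sphere c r) : IsUnitDistanceEmbedding G f := by
  refine ⟨hf, hdist, fun u v _ w hwu hwv hw => ?_⟩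
  refine notMem_segment_of_dist_eq (hr u) (hr v) (hr w) ((hL.comp hf).ne hwu)
    ((hL.comp hf).ne hwv) ?_
  rw [mem_segment_iff_wbtw, hL.wbtw_map_iff]
  exact mem_segment_iff_wbtw.1 hw

end UnitDistance

section InnerProductSpace

variable [NormedAddCommGroup E] [InnerProductSpace ℝ E]

theorem Orthonormal.dist_eq_sqrt_two {e : V → E} (he : Orthonormal ℝ e) {i j : V} (hij : i ≠ j) :
    dist (e i) (e j) = √2 := by
  rw [dist_eq_norm, ← Real.sqrt_sq (norm_nonneg _), norm_sub_sq_real, he.1 i, he.1 j, he.2 hij]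
  norm_num

theorem Orthonormal.isUnitDistanceEmbedding_inv_sqrt_two_smul {e : V → E} (he : Orthonormal ℝ e)
    (G : SimpleGraph V) : IsUnitDistanceEmbedding G fun v => (√2)⁻¹ • e v := by
  have hs : (√2)⁻¹ ≠ 0 := by positivity
  refine isUnitDistanceEmbedding_of_map_mem_sphere ((smul_right_injective E hs).comp
    he.linearIndependent.injective) (fun u v huv => ?_) (AffineMap.id ℝ E) Function.injective_id
    0 (√2)⁻¹ fun v => ?_
  · rw [dist_smul₀, he.dist_eq_sqrt_two huv.ne, Real.norm_eq_abs, abs_of_pos (by positivity),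
      inv_mul_cancel₀ (by positivity)]
  · simp [norm_smul, he.1 v]

theorem hasUDEmbedding_card [Fintype V] (G : SimpleGraph V) : HasUDEmbedding G (Fintype.card V) :=
  ⟨_, ((EuclideanSpace.basisFun (Fin _) ℝ).orthonormal.comp _
    (Fintype.equivFin V).injective).isUnitDistanceEmbedding_inv_sqrt_two_smul G⟩

variable [FiniteDimensional ℝ E] {G : SimpleGraph V} {f : V → E}

theorem IsUnitDistanceEmbedding.hasUDEmbedding_finrank (hf : IsUnitDistanceEmbedding G f) :
    HasUDEmbedding G (finrank ℝ E) :=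
  ⟨_, (isUnitDistanceEmbedding_affineIsometry_comp_iff
    (stdOrthonormalBasis ℝ E).repr.toLinearIsometry.toAffineIsometry).2 hf⟩

theorem IsUnitDistanceEmbedding.hasSphericalEmbeddingRadius_finrank
    (hf : IsUnitDistanceEmbedding G f) {U : Submodule ℝ E} {p : E} {r : ℝ}
    (hU : ∀ v, f v - p ∈ U) (hr : ∀ v, dist (f v) p = r) :
    HasSphericalEmbeddingRadius G (finrank ℝ U) r := by
  let g : V → U := fun v => ⟨f v - p, hU v⟩
  have hg : IsUnitDistanceEmbedding G g := by
    refine (isUnitDistanceEmbedding_affineIsometry_comp_iff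
      ((AffineIsometryEquiv.vaddConst ℝ p).toAffineIsometry.comp
        U.subtypeₗᵢ.toAffineIsometry)).1 ?_
    convert hf using 1
    ext v
    simp [g]
  refine ⟨_, (isUnitDistanceEmbedding_affineIsometry_comp_iff
    (stdOrthonormalBasis ℝ U).repr.toLinearIsometry.toAffineIsometry).2 hg, 0, fun v => ?_⟩
  simp [g, ← dist_eq_norm, hr]

end InnerProductSpace

section GraphJoin

variable {G : SimpleGraph V} {H : SimpleGraph W}

@[simp] theorem graphJoin_adj_inl_inl {a b : V} :
    (graphJoin G H).Adj (.inl a) (.inl b) ↔ G.Adj a b := by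
  simp only [graphJoin, SimpleGraph.fromRel_adj, ne_eq, Sum.inl.injEq]
  exact ⟨fun h => h.2.elim id G.adj_symm, fun h => ⟨h.ne, .inl h⟩⟩

@[simp] theorem graphJoin_adj_inr_inr {a b : W} :
    (graphJoin G H).Adj (.inr a) (.inr b) ↔ H.Adj a b := by
  simp only [graphJoin, SimpleGraph.fromRel_adj, ne_eq, Sum.inr.injEq]
  exact ⟨fun h => h.2.elim id H.adj_symm, fun h => ⟨h.ne, .inl h⟩⟩

@[simp] theorem graphJoin_adj_inl_inr (a : V) (b : W) :
    (graphJoin G H).Adj (.inl a) (.inr b) := by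
  simp [graphJoin]

@[simp] theorem graphJoin_adj_inr_inl (a : W) (b : V) :
    (graphJoin G H).Adj (.inr a) (.inl b) :=
  (graphJoin_adj_inl_inr b a).symm

variable [NormedAddCommGroup E] [NormedSpace ℝ E] {f : V ⊕ W → E}

theorem IsUnitDistanceEmbedding.comp_inl (hf : IsUnitDistanceEmbedding (graphJoin G H) f) :
    IsUnitDistanceEmbedding G (f ∘ Sum.inl) :=
  ⟨hf.1.comp Sum.inl_injective, fun _ _ h => hf.2.1 (graphJoin_adj_inl_inl.2 h),
    fun _ _ h w hwu hwv => hf.2.2 (graphJoin_adj_inl_inl.2 h) (.inl w) (by simpa) (by simpa)⟩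

theorem IsUnitDistanceEmbedding.comp_inr (hf : IsUnitDistanceEmbedding (graphJoin G H) f) :
    IsUnitDistanceEmbedding H (f ∘ Sum.inr) :=
  ⟨hf.1.comp Sum.inr_injective, fun _ _ h => hf.2.1 (graphJoin_adj_inr_inr.2 h),
    fun _ _ h w hwu hwv => hf.2.2 (graphJoin_adj_inr_inr.2 h) (.inr w) (by simpa) (by simpa)⟩

end GraphJoin

section JoinConstruction

variable {E₁ E₂ : Type*} [NormedAddCommGroup E₁] [InnerProductSpace ℝ E₁]
  [NormedAddCommGroup E₂] [InnerProductSpace ℝ E₂]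
  {G : SimpleGraph V} {H : SimpleGraph W} {f : V → E₁} {g : W → E₂} {r₁ r₂ : ℝ}

/-- Rescaling the two factors by `r₁⁻¹` and `r₂⁻¹` moves all vertices onto the unit sphere,
which settles the segment condition. -/
theorem IsUnitDistanceEmbedding.graphJoin (hf : IsUnitDistanceEmbedding G f)
    (hg : IsUnitDistanceEmbedding H g) (hr₁ : 0 < r₁) (hr₂ : 0 < r₂) (hr : r₁ ^ 2 + r₂ ^ 2 = 1)
    (hf₁ : ∀ v, ‖f v‖ = r₁) (hg₂ : ∀ w, ‖g w‖ = r₂) :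
    IsUnitDistanceEmbedding (graphJoin G H)
      (Sum.elim (fun v => WithLp.toLp 2 (f v, 0)) fun w => WithLp.toLp 2 (0, g w)) := by
  let L : WithLp 2 (E₁ × E₂) ≃ₗ[ℝ] WithLp 2 (E₁ × E₂) :=
    WithLp.linearEquiv 2 ℝ (E₁ × E₂) ≪≫ₗ
      (LinearEquiv.smulOfNeZero ℝ E₁ r₁⁻¹ (by positivity)).prodCongr
        (LinearEquiv.smulOfNeZero ℝ E₂ r₂⁻¹ (by positivity)) ≪≫ₗ
      (WithLp.linearEquiv 2 ℝ (E₁ × E₂)).symm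
  refine isUnitDistanceEmbedding_of_map_mem_sphere ?_ ?_ L.toLinearMap.toAffineMap L.injective
    0 1 ?_
  · refine Function.Injective.sumElim (fun v v' h => hf.1 (by simpa using h))
      (fun w w' h => hg.1 (by simpa using h)) fun v w h => ?_
    simp only [WithLp.toLp.injEq, Prod.mk.injEq] at h
    exact hr₁.ne (by simpa [h.1] using hf₁ v)
  · rintro (v | w) (v' | w') h
    · simp [hf.2.1 (graphJoin_adj_inl_inl.1 h)]
    · simp [WithLp.prod_dist_eq_of_L2, hf₁, hg₂, hr]
    · simp [WithLp.prod_dist_eq_of_L2, hf₁, hg₂, hr]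
    · simp [hg.2.1 (graphJoin_adj_inr_inr.1 h)]
  · rintro (v | w) <;>
      simp [L, norm_smul, hf₁, hg₂, abs_of_pos, hr₁, hr₂, hr₁.ne', hr₂.ne']

end JoinConstruction

theorem HasSphericalEmbeddingRadius.graphJoin {G : SimpleGraph V} {H : SimpleGraph W} {m k : ℕ}
    {r₁ r₂ : ℝ} (hG : HasSphericalEmbeddingRadius G m r₁) (hH : HasSphericalEmbeddingRadius H k r₂)
    (hr₁ : 0 < r₁) (hr₂ : 0 < r₂) (hr : r₁ ^ 2 + r₂ ^ 2 = 1) :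
    HasUDEmbedding (graphJoin G H) (m + k) := by
  obtain ⟨f, hf, c₁, hc₁⟩ := hG
  obtain ⟨g, hg, c₂, hc₂⟩ := hH
  have hjoin := (IsUnitDistanceEmbedding.sub_const hf c₁).graphJoin
    (IsUnitDistanceEmbedding.sub_const hg c₂) hr₁ hr₂ hr (fun v => by rw [← dist_eq_norm, hc₁])
    (fun w => by rw [← dist_eq_norm, hc₂])
  have hrank : finrank ℝ (WithLp 2 (EuclideanSpace ℝ (Fin m) × EuclideanSpace ℝ (Fin k))) = m + k :=
    (WithLp.linearEquiv 2 ℝ _).finrank_eq.trans (by simp)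
  exact hrank ▸ hjoin.hasUDEmbedding_finrank

section Decomposition

theorem pos_of_injective_of_forall_dist_eq [Nontrivial V] [MetricSpace E] {a : V → E}
    (ha : Function.Injective a) {p : E} {r : ℝ} (h : ∀ v, dist (a v) p = r) : 0 < r := by
  obtain ⟨v, v', hne⟩ := exists_pair_ne V
  refine (dist_nonneg.trans_eq (h v)).lt_of_ne fun hr => hne (ha ?_)
  exact (dist_eq_zero.1 ((h v).trans hr.symm)).trans (dist_eq_zero.1 ((h v').trans hr.symm)).symm

variable [NormedAddCommGroup E] [InnerProductSpace ℝ E]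

theorem vectorSpan_isOrtho_of_forall_dist_eq {a : V → E} {b : W → E} {d : ℝ}
    (h : ∀ v w, dist (a v) (b w) = d) : vectorSpan ℝ (range a) ⟂ vectorSpan ℝ (range b) := by
  rw [vectorSpan_def, vectorSpan_def, Submodule.isOrtho_span]
  rintro _ ⟨_, ⟨v, rfl⟩, _, ⟨v', rfl⟩, rfl⟩ _ ⟨_, ⟨w, rfl⟩, _, ⟨w', rfl⟩, rfl⟩
  exact inner_vsub_vsub_of_dist_eq_of_dist_eq (by rw [dist_comm, h, dist_comm, h])
    (by rw [dist_comm, h, dist_comm, h])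

/-- Pythagoras twice; the projection onto `s` of a point of `t` does not depend on the point. -/
theorem dist_sq_eq_of_isOrtho {s t : AffineSubspace ℝ E} [Nonempty s] [Nonempty t]
    [s.direction.HasOrthogonalProjection] [t.direction.HasOrthogonalProjection]
    (hst : s.direction ⟂ t.direction) {x y y₀ : E} (hx : x ∈ s) (hy : y ∈ t) (hy₀ : y₀ ∈ t) :
    dist x y ^ 2 = dist x (orthogonalProjection s y₀) ^ 2 +
      dist (orthogonalProjection s y₀ : E) (orthogonalProjection t (orthogonalProjection s y₀)) ^ 2
      + dist (orthogonalProjection t (orthogonalProjection s y₀) : E) y ^ 2 := by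
  set p : E := (orthogonalProjection s y₀ : E)
  set q : E := (orthogonalProjection t p : E)
  have hp : (orthogonalProjection s y : E) = p := by
    rw [orthogonalProjection_eq_orthogonalProjection_iff_vsub_mem.2]
    exact hst.symm (AffineSubspace.vsub_mem_direction hy hy₀)
  have h₁ := dist_sq_eq_dist_orthogonalProjection_sq_add_dist_orthogonalProjection_sq y hx
  have h₂ := dist_sq_eq_dist_orthogonalProjection_sq_add_dist_orthogonalProjection_sq (s := t) p hy
  rw [hp] at h₁
  rw [dist_comm q y, dist_comm y p] at *
  simp only [← sq] at h₁ h₂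
  linarith

variable [FiniteDimensional ℝ E]

theorem exists_centers_of_forall_dist_eq_one [Nonempty V] [Nonempty W] {a : V → E} {b : W → E}
    (h : ∀ v w, dist (a v) (b w) = 1) :
    ∃ p q : E, p ∈ affineSpan ℝ (range a) ∧ q ∈ affineSpan ℝ (range b) ∧
      p - q ∈ (vectorSpan ℝ (range a) ⊔ vectorSpan ℝ (range b))ᗮ ∧
      ∀ v w, dist (a v) p ^ 2 + dist p q ^ 2 + dist q (b w) ^ 2 = 1 := by
  set s := affineSpan ℝ (range a)
  set t := affineSpan ℝ (range b)
  have hst : s.direction ⟂ t.direction := by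
    simpa only [s, t, direction_affineSpan] using vectorSpan_isOrtho_of_forall_dist_eq h
  have hb : ∀ w, b w ∈ t := fun w => mem_affineSpan ℝ (mem_range_self w)
  obtain ⟨w₀⟩ := ‹Nonempty W›
  set p : E := (orthogonalProjection s (b w₀) : E)
  set q : E := (orthogonalProjection t p : E)
  refine ⟨p, q, orthogonalProjection_mem _, orthogonalProjection_mem _, ?_, fun v w => ?_⟩
  · rw [← Submodule.inf_orthogonal, ← direction_affineSpan, ← direction_affineSpan]
    refine ⟨?_, vsub_orthogonalProjection_mem_direction_orthogonal t p⟩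
    have hpq : p - q = -(b w₀ -ᵥ p) + (b w₀ -ᵥ q) := by simp only [vsub_eq_sub]; abel
    rw [hpq]
    exact add_mem (neg_mem (vsub_orthogonalProjection_mem_direction_orthogonal s _))
      (hst.symm (AffineSubspace.vsub_mem_direction (hb w₀) (orthogonalProjection_mem _)))
  · have := dist_sq_eq_of_isOrtho hst (mem_affineSpan ℝ (mem_range_self v)) (hb w) (hb w₀)
    rwa [h v w, one_pow, eq_comm] at this

theorem exists_hasSphericalEmbeddingRadius_of_forall_dist_eq_one [Nontrivial V] [Nontrivial W]
    {G : SimpleGraph V} {H : SimpleGraph W} {a : V → E} {b : W → E}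
    (ha : IsUnitDistanceEmbedding G a) (hb : IsUnitDistanceEmbedding H b)
    (h : ∀ v w, dist (a v) (b w) = 1) :
    ∃ (m k : ℕ) (r₁ r₂ : ℝ), m + k ≤ finrank ℝ E ∧ 0 < r₁ ∧ 0 < r₂ ∧ r₁ ^ 2 + r₂ ^ 2 ≤ 1 ∧
      (m + k = finrank ℝ E → r₁ ^ 2 + r₂ ^ 2 = 1) ∧
      HasSphericalEmbeddingRadius G m r₁ ∧ HasSphericalEmbeddingRadius H k r₂ := by
  obtain ⟨v₀⟩ : Nonempty V := inferInstance
  obtain ⟨w₀⟩ : Nonempty W := inferInstance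
  obtain ⟨p, q, hp, hq, hpq, hdist⟩ := exists_centers_of_forall_dist_eq_one h
  simp only [dist_comm q] at hdist
  have hU := vectorSpan_isOrtho_of_forall_dist_eq h
  have hr₁ : ∀ v, dist (a v) p = dist (a v₀) p := fun v =>
    (sq_eq_sq₀ dist_nonneg dist_nonneg).1 (by linarith [hdist v w₀, hdist v₀ w₀])
  have hr₂ : ∀ w, dist (b w) q = dist (b w₀) q := fun w =>
    (sq_eq_sq₀ dist_nonneg dist_nonneg).1 (by linarith [hdist v₀ w, hdist v₀ w₀])
  have hsum : dist (a v₀) p ^ 2 + dist (b w₀) q ^ 2 = 1 - dist p q ^ 2 := by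
    linarith [hdist v₀ w₀]
  refine ⟨_, _, _, _, Submodule.finrank_add_finrank_le_of_disjoint hU.disjoint,
    pos_of_injective_of_forall_dist_eq ha.1 hr₁, pos_of_injective_of_forall_dist_eq hb.1 hr₂,
    by nlinarith, fun hmk => ?_,
    ha.hasSphericalEmbeddingRadius_finrank (fun v => ?_) hr₁,
    hb.hasSphericalEmbeddingRadius_finrank (fun w => ?_) hr₂⟩
  · rw [Submodule.eq_top_of_disjoint _ _ hmk.ge hU.disjoint, Submodule.top_orthogonal_eq_bot,
      Submodule.mem_bot, sub_eq_zero] at hpq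
    rw [hsum, hpq, dist_self]
    ring
  · simpa [direction_affineSpan] using
      AffineSubspace.vsub_mem_direction (mem_affineSpan ℝ (mem_range_self v)) hp
  · simpa [direction_affineSpan] using
      AffineSubspace.vsub_mem_direction (mem_affineSpan ℝ (mem_range_self w)) hq

end Decomposition

theorem HasUDEmbedding.exists_hasSphericalEmbeddingRadius_of_graphJoin [Nontrivial V]
    [Nontrivial W] {G : SimpleGraph V} {H : SimpleGraph W} {N : ℕ}
    (h : HasUDEmbedding (graphJoin G H) N) :
    ∃ (m k : ℕ) (r₁ r₂ : ℝ), m + k ≤ N ∧ 0 < r₁ ∧ 0 < r₂ ∧ r₁ ^ 2 + r₂ ^ 2 ≤ 1 ∧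
      (m + k = N → r₁ ^ 2 + r₂ ^ 2 = 1) ∧
      HasSphericalEmbeddingRadius G m r₁ ∧ HasSphericalEmbeddingRadius H k r₂ := by
  obtain ⟨F, hF⟩ := h
  simpa only [finrank_euclideanSpace_fin] using
    exists_hasSphericalEmbeddingRadius_of_forall_dist_eq_one (IsUnitDistanceEmbedding.comp_inl hF)
      (IsUnitDistanceEmbedding.comp_inr hF) fun v w => hF.2.1 (graphJoin_adj_inl_inr v w)

theorem HasSphericalEmbedding.sphericalDim_le [Fintype V] {G : SimpleGraph V} {n : ℕ}
    (hV : 1 < Fintype.card V) (h : HasSphericalEmbedding G n) : sphericalDim G ≤ n := by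
  rw [sphericalDim, if_neg hV.not_ge]
  exact Nat.sInf_le h

theorem stmt0_general {V W : Type} [Fintype V] [Fintype W] (G : SimpleGraph V) (H : SimpleGraph W)
    (hV : 1 < Fintype.card V) (hW : 1 < Fintype.card W) :
    ((∃ r₁ r₂ : ℝ, 0 < r₁ ∧ r₁ < 1 ∧ 0 < r₂ ∧ r₂ < 1 ∧ r₁ ^ 2 + r₂ ^ 2 = 1 ∧
        HasSphericalEmbeddingRadius G (sphericalDim G) r₁ ∧
        HasSphericalEmbeddingRadius H (sphericalDim H) r₂) →
      graphDim (graphJoin G H) = sphericalDim G + sphericalDim H) ∧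
    ((¬ ∃ r₁ r₂ : ℝ, 0 < r₁ ∧ r₁ < 1 ∧ 0 < r₂ ∧ r₂ < 1 ∧ r₁ ^ 2 + r₂ ^ 2 = 1 ∧
        HasSphericalEmbeddingRadius G (sphericalDim G) r₁ ∧
        HasSphericalEmbeddingRadius H (sphericalDim H) r₂) →
      sphericalDim G + sphericalDim H < graphDim (graphJoin G H)) := by
  have := Fintype.one_lt_card_iff_nontrivial.1 hV
  have := Fintype.one_lt_card_iff_nontrivial.1 hW
  have hN : HasUDEmbedding (graphJoin G H) (graphDim (graphJoin G H)) :=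
    Nat.sInf_mem (s := {n | HasUDEmbedding (graphJoin G H) n}) ⟨_, hasUDEmbedding_card _⟩
  obtain ⟨m, k, r₁, r₂, hmk, hr₁, hr₂, hr, hr_eq, hGm, hHk⟩ :=
    hN.exists_hasSphericalEmbeddingRadius_of_graphJoin
  have hm := HasSphericalEmbedding.sphericalDim_le hV ⟨r₁, hr₁, by nlinarith, hGm⟩
  have hk := HasSphericalEmbedding.sphericalDim_le hW ⟨r₂, hr₂, by nlinarith, hHk⟩
  have hle : sphericalDim G + sphericalDim H ≤ graphDim (graphJoin G H) := by omega
  refine ⟨fun ⟨s₁, s₂, hs₁, _, hs₂, _, hs, hG, hH⟩ =>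
    le_antisymm (Nat.sInf_le (hG.graphJoin hH hs₁ hs₂ hs)) hle,
    fun hnot => hle.lt_of_ne fun hN => hnot ?_⟩
  obtain rfl : m = sphericalDim G := by omega
  obtain rfl : k = sphericalDim H := by omega
  exact ⟨r₁, r₂, hr₁, by nlinarith, hr₂, by nlinarith, hr_eq (by omega), hGm, hHk⟩

/-- If `G` and `H` (each with more than one vertex, each having a spherical
dimension) can be embedded on spheres of radii `r₁, r₂ ∈ (0,1)` in dimensions `sdim G`,
`sdim H` with `r₁² + r₂² = 1`, then `dim (G + H) = sdim G + sdim H`; otherwise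
`dim (G + H) > sdim G + sdim H`. -/
theorem stmt0 {V W : Type} [Fintype V] [Fintype W] (G : SimpleGraph V) (H : SimpleGraph W)
    (hV : 1 < Fintype.card V) (hW : 1 < Fintype.card W)
    (hGs : ∃ n, HasSphericalEmbedding G n) (hHs : ∃ n, HasSphericalEmbedding H n) :
    ((∃ r₁ r₂ : ℝ, 0 < r₁ ∧ r₁ < 1 ∧ 0 < r₂ ∧ r₂ < 1 ∧ r₁ ^ 2 + r₂ ^ 2 = 1 ∧
        HasSphericalEmbeddingRadius G (sphericalDim G) r₁ ∧
        HasSphericalEmbeddingRadius H (sphericalDim H) r₂) →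
      graphDim (graphJoin G H) = sphericalDim G + sphericalDim H) ∧
    ((¬ ∃ r₁ r₂ : ℝ, 0 < r₁ ∧ r₁ < 1 ∧ 0 < r₂ ∧ r₂ < 1 ∧ r₁ ^ 2 + r₂ ^ 2 = 1 ∧
        HasSphericalEmbeddingRadius G (sphericalDim G) r₁ ∧
        HasSphericalEmbeddingRadius H (sphericalDim H) r₂) →
      sphericalDim G + sphericalDim H < graphDim (graphJoin G H)) :=
  stmt0_general G H hV hW
end

section
/- Let X be a finite subset of ℝ^{n+m} contained in a sphere S = {x ∈ A : ‖x − c‖ = r} of radius r > 0, where A is an n-dimensional affine subspace of ℝ^{n+m} with c ∈ A, and suppose the affine hull of X equals A (so S is the unique such sphere containing X). Then for every d > r, the set of points p ∈ ℝ^{n+m} satisfying ‖p − x‖ = d for every x ∈ X is exactly the sphere of radius √(d² − r²) centered at c and contained in the m-dimensional affine subspace through c orthogonal to A, i.e., the set {p ∈ c + A^⊥ : ‖p − c‖ = √(d² − r²)}, where A^⊥ is the orthogonal complement of the direction space of A. -/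
/-!
Since `c` and `p` are both equidistant from any two points `x, y ∈ X`, the vector `p - c` is
orthogonal to `y - x`; these differences span the direction of `A`, so `p` lies in `c + Aᗮ`.
Pythagoras at the right angle `p, c, x` then gives `d² = ‖p - c‖² + r²`, and conversely every
point of `c + Aᗮ` at distance `√(d² - r²)` from `c` is at distance `d` from each `x ∈ X`.
-/

section EquidistantPoints

variable {V P : Type*} [NormedAddCommGroup V] [InnerProductSpace ℝ V] [MetricSpace P]
  [NormedAddTorsor V P]

theorem vsub_mem_orthogonal_vectorSpan_of_dist_eq {s : Set P} {c p : P} {r d : ℝ}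
    (hc : ∀ x ∈ s, dist x c = r) (hp : ∀ x ∈ s, dist p x = d) :
    p -ᵥ c ∈ (vectorSpan ℝ s)ᗮ := by
  have hortho : vectorSpan ℝ s ⟂ ℝ ∙ (p -ᵥ c) := by
    rw [vectorSpan_def, Submodule.isOrtho_span]
    rintro _ ⟨x, hx, y, hy, rfl⟩ _ rfl
    rw [real_inner_comm]
    refine EuclideanGeometry.inner_vsub_vsub_of_dist_eq_of_dist_eq ?_ ?_
    · rw [hc x hx, hc y hy]
    · rw [dist_comm, hp y hy, dist_comm, hp x hx]
  exact hortho.ge (Submodule.mem_span_singleton_self _)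

theorem dist_sq_eq_of_vsub_mem_orthogonal_vectorSpan {s : Set P} {c p x : P}
    (hc : c ∈ affineSpan ℝ s) (hx : x ∈ affineSpan ℝ s) (hp : p -ᵥ c ∈ (vectorSpan ℝ s)ᗮ) :
    dist p x ^ 2 = dist p c ^ 2 + dist x c ^ 2 := by
  rw [dist_sq_of_inner_eq_zero (Submodule.inner_left_of_mem_orthogonal
    (vsub_mem_vectorSpan_of_mem_affineSpan_of_mem_affineSpan hx hc) hp), dist_comm c x]

theorem forall_dist_eq_iff_of_dist_eq {s : Set P} {c p : P} {r d : ℝ}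
    (hcs : c ∈ affineSpan ℝ s) (hc : ∀ x ∈ s, dist x c = r) (hd : 0 ≤ d) :
    (∀ x ∈ s, dist p x = d) ↔ p -ᵥ c ∈ (vectorSpan ℝ s)ᗮ ∧ dist p c ^ 2 + r ^ 2 = d ^ 2 := by
  have hpyth : p -ᵥ c ∈ (vectorSpan ℝ s)ᗮ → ∀ x ∈ s, dist p x ^ 2 = dist p c ^ 2 + r ^ 2 :=
    fun hp x hx ↦ by
      rw [dist_sq_eq_of_vsub_mem_orthogonal_vectorSpan hcs (subset_affineSpan ℝ s hx) hp,
        hc x hx]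
  constructor
  · intro hp
    have hperp := vsub_mem_orthogonal_vectorSpan_of_dist_eq hc hp
    obtain ⟨x, hx⟩ := (affineSpan_nonempty ℝ).mp ⟨c, hcs⟩
    exact ⟨hperp, by rw [← hpyth hperp x hx, hp x hx]⟩
  · rintro ⟨hperp, hsum⟩ x hx
    rw [← sq_eq_sq₀ dist_nonneg hd, hpyth hperp x hx, hsum]

end EquidistantPoints

theorem stmt9_general {n m : ℕ} (X : Set (EuclideanSpace ℝ (Fin (n + m))))
    (A : AffineSubspace ℝ (EuclideanSpace ℝ (Fin (n + m))))
    (c : EuclideanSpace ℝ (Fin (n + m))) (hc : c ∈ A)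
    (r : ℝ) (hr : 0 < r) (hX : ∀ x ∈ X, x ∈ A ∧ dist x c = r)
    (hspan : affineSpan ℝ X = A)
    (d : ℝ) (hd : r < d) :
    {p : EuclideanSpace ℝ (Fin (n + m)) | ∀ x ∈ X, dist p x = d} =
      {p : EuclideanSpace ℝ (Fin (n + m)) |
        p ∈ AffineSubspace.mk' c A.directionᗮ ∧ dist p c = Real.sqrt (d ^ 2 - r ^ 2)} := by
  subst hspan
  have hd₀ : 0 ≤ d := (hr.trans hd).le
  have hd₂ : 0 ≤ d ^ 2 - r ^ 2 := by nlinarith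
  ext p
  rw [Set.mem_ofPred_eq, forall_dist_eq_iff_of_dist_eq hc (fun x hx ↦ (hX x hx).2) hd₀,
    Set.mem_ofPred_eq, AffineSubspace.mem_mk', direction_affineSpan, eq_comm (a := dist p c),
    Real.sqrt_eq_iff_eq_sq hd₂ dist_nonneg]
  constructor <;> rintro ⟨hperp, h⟩ <;> exact ⟨hperp, by linarith⟩

/-- If a finite set `X ⊆ ℝ^{n+m}` lies on the sphere of radius `r > 0` centered
at `c` inside an `n`-dimensional affine subspace `A` (with `c ∈ A`) and the affine hull of
`X` is `A`, then for every `d > r` the set of points at distance `d` from every point of `X`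
is exactly the sphere of radius `√(d² - r²)` centered at `c` in the affine subspace through
`c` orthogonal to `A`. -/
theorem stmt9 {n m : ℕ} (X : Set (EuclideanSpace ℝ (Fin (n + m)))) (hXfin : X.Finite)
    (A : AffineSubspace ℝ (EuclideanSpace ℝ (Fin (n + m))))
    (c : EuclideanSpace ℝ (Fin (n + m))) (hc : c ∈ A)
    (hdim : Module.finrank ℝ A.direction = n)
    (r : ℝ) (hr : 0 < r) (hX : ∀ x ∈ X, x ∈ A ∧ dist x c = r)
    (hspan : affineSpan ℝ X = A)
    (d : ℝ) (hd : r < d) :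
    {p : EuclideanSpace ℝ (Fin (n + m)) | ∀ x ∈ X, dist p x = d} =
      {p : EuclideanSpace ℝ (Fin (n + m)) |
        p ∈ AffineSubspace.mk' c A.directionᗮ ∧ dist p c = Real.sqrt (d ^ 2 - r ^ 2)} :=
  stmt9_general X A c hc r hr hX hspan d hd
end

section
/- For every n ≥ 3 with n ≠ 6, the cycle graph C_n has spherical dimension 2, while C_6 has spherical dimension 3. -/
/-!
On a sphere the segment condition of a unit-distance embedding is automatic, by strict convexity.

Let `u` be a unit-distance `n`-cycle on a circle of radius `r < 1` in `ℂ`, centred at `0`. The two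
points of the circle at distance `1` from `u j` are `ζ u j` and `ζ̄ u j` for a fixed `ζ` with
`‖ζ‖ = 1` and `Re ζ = 1 - 1 / (2 r²) < 1 / 2`. As the two neighbours of `u j` are distinct,
they are these two points, so the cycle always turns the same way: `u j = ζ ^ j * u 0` and `ζ` is a
primitive `n`-th root of unity. Conversely, a primitive root with `Re ζ < 1 / 2` yields such a star
polygon. For `n ≠ 6` one is `exp (2πik/n)` with `k` coprime to `n` and `n < 6k < 5n`, whereas the
primitive sixth roots of unity have real part exactly `1 / 2`. In `ℝ³`, the six vertices of the
unit cube other than two opposite corners form a unit-distance hexagon on the sphere of radius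
`√3 / 2` around the centre of the cube.
-/

open Metric Real ComplexConjugate Fin.NatCast
open SimpleGraph (cycleGraph cycleGraph_adj')

section SphericalEmbedding

variable {V : Type*} {G : SimpleGraph V}

theorem notMem_segment_of_mem_sphere {E : Type*} [NormedAddCommGroup E] [NormedSpace ℝ E]
    [StrictConvexSpace ℝ E] {c u v w : E} {r : ℝ} (hu : u ∈ sphere c r)
    (hv : v ∈ sphere c r) (hw : w ∈ sphere c r) (hwu : w ≠ u) (hwv : w ≠ v) :
    w ∉ segment ℝ u v := by
  rcases eq_or_ne u v with rfl | huv
  · simpa [segment_same] using hwu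
  rw [← insert_endpoints_openSegment]
  rintro (rfl | rfl | hmem)
  · exact hwu rfl
  · exact hwv rfl
  · exact (mem_ball.1 (openSegment_subset_ball_of_ne (sphere_subset_closedBall hu)
      (sphere_subset_closedBall hv) huv hmem)).ne (mem_sphere.1 hw)

theorem hasSphericalEmbeddingRadius_of_isometry {E : Type*} [MetricSpace E] {n : ℕ}
    {e : E → EuclideanSpace ℝ (Fin n)} (he : Isometry e) {f : V → E}
    (hf : Function.Injective f) (hadj : ∀ ⦃u v⦄, G.Adj u v → dist (f u) (f v) = 1) {c : E}
    {r : ℝ} (hsphere : ∀ v, dist (f v) c = r) : HasSphericalEmbeddingRadius G n r := by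
  have hinj : Function.Injective (e ∘ f) := he.injective.comp hf
  have hmem : ∀ v, e (f v) ∈ sphere (e c) r := fun v => by
    rw [mem_sphere, he.dist_eq, hsphere]
  refine ⟨e ∘ f, ⟨hinj, fun u v huv => ?_, fun u v _ w hwu hwv => ?_⟩, e c, hmem⟩
  · rw [Function.comp_apply, Function.comp_apply, he.dist_eq, hadj huv]
  · exact notMem_segment_of_mem_sphere (hmem u) (hmem v) (hmem w) (hinj.ne hwu) (hinj.ne hwv)

theorem sphericalDim_eq_of_hasSphericalEmbedding [Fintype V] {n : ℕ} (hV : 1 < Fintype.card V)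
    (hn : HasSphericalEmbedding G n) (hlt : ∀ m < n, ¬ HasSphericalEmbedding G m) :
    sphericalDim G = n := by
  rw [sphericalDim, if_neg hV.not_ge]
  exact le_antisymm (Nat.sInf_le hn) (le_csInf ⟨n, hn⟩ fun m hm => not_lt.1 fun h => hlt m h hm)

theorem card_le_two_of_injective_of_dist_eq [Fintype V] {n : ℕ} (hn : n ≤ 1)
    {f : V → EuclideanSpace ℝ (Fin n)} (hf : Function.Injective f)
    {c : EuclideanSpace ℝ (Fin n)} {r : ℝ} (hsphere : ∀ v, dist (f v) c = r) :
    Fintype.card V ≤ 2 := by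
  interval_cases n
  · exact (Fintype.card_le_one_iff_subsingleton.2 hf.subsingleton).trans one_le_two
  · classical
    have hcoord : ∀ v, f v 0 ∈ ({c 0 - r, c 0 + r} : Finset ℝ) := fun v => by
      have h := hsphere v
      rw [EuclideanSpace.dist_eq, Fin.sum_univ_one, Real.sqrt_sq dist_nonneg, Real.dist_eq,
        abs_eq (h ▸ abs_nonneg _)] at h
      rw [Finset.mem_insert, Finset.mem_singleton]
      rcases h with h | h
      · right; linarith
      · left; linarith
    calc Fintype.card V = (Finset.univ : Finset V).card := rfl
      _ ≤ ({c 0 - r, c 0 + r} : Finset ℝ).card :=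
        Finset.card_le_card_of_injOn (fun v => f v 0) (fun v _ => hcoord v)
          fun v _ w _ h => hf (by ext i; rw [Subsingleton.elim i 0]; exact h)
      _ ≤ 2 := Finset.card_le_two

theorem not_hasSphericalEmbedding_of_le_one [Fintype V] {n : ℕ} (hV : 2 < Fintype.card V)
    (hn : n ≤ 1) : ¬ HasSphericalEmbedding G n := by
  rintro ⟨r, -, -, f, ⟨hf, -, -⟩, c, hsphere⟩
  exact hV.not_ge (card_le_two_of_injective_of_dist_eq hn hf hsphere)

end SphericalEmbedding

namespace Complex

theorem norm_sub_one_sq_of_norm_eq_one {q : ℂ} (hq : ‖q‖ = 1) :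
    ‖q - 1‖ ^ 2 = 2 - 2 * q.re := by
  have him := sq_norm_sub_sq_re q
  rw [hq] at him
  rw [Complex.sq_norm, normSq_apply, sub_re, sub_im, one_re, one_im]
  linear_combination -him

theorem re_div_of_norm_sub_eq_one {z w : ℂ} {r : ℝ} (hr : 0 < r) (hz : ‖z‖ = r)
    (hw : ‖w‖ = r) (h : ‖w - z‖ = 1) : (w / z).re = 1 - 1 / (2 * r ^ 2) := by
  have hz0 : z ≠ 0 := norm_pos_iff.1 (hz ▸ hr)
  have hq : ‖w / z‖ = 1 := by rw [norm_div, hz, hw, div_self hr.ne']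
  have hscale : ‖w / z - 1‖ * r = 1 := by
    rw [← hz, ← norm_mul, sub_mul, div_mul_cancel₀ _ hz0, one_mul, h]
  have hsq := norm_sub_one_sq_of_norm_eq_one hq
  field_simp
  nlinarith

theorem eq_or_eq_conj_of_norm_eq_of_re_eq {p q : ℂ} (hn : ‖p‖ = ‖q‖) (hre : p.re = q.re) :
    p = q ∨ p = conj q := by
  have him : p.im ^ 2 = q.im ^ 2 := by
    rw [← sq_norm_sub_sq_re, ← sq_norm_sub_sq_re, hn, hre]
  rcases sq_eq_sq_iff_eq_or_eq_neg.1 him with h | h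
  · exact Or.inl (ext hre h)
  · exact Or.inr (ext (by simpa using hre) (by simpa using h))

end Complex

theorem IsPrimitiveRoot.re_eq_one_half_of_six {ζ : ℂ} (hζ : IsPrimitiveRoot ζ 6) :
    ζ.re = 1 / 2 := by
  have hroot := hζ.isRoot_cyclotomic (by norm_num)
  rw [Polynomial.cyclotomic_six] at hroot
  simp only [Polynomial.IsRoot, Polynomial.eval_add, Polynomial.eval_sub, Polynomial.eval_pow,
    Polynomial.eval_X, Polynomial.eval_one] at hroot
  have hζ0 : ζ ≠ 0 := hζ.ne_zero (by norm_num)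
  have hsum : ζ + ζ⁻¹ = 1 := by
    field_simp
    linear_combination hroot
  rw [Complex.inv_eq_conj (hζ.norm'_eq_one (by norm_num)), Complex.add_conj] at hsum
  have hre := congrArg Complex.re hsum
  simp only [Complex.ofReal_re, Complex.one_re] at hre
  linarith

theorem Real.cos_lt_one_half {x : ℝ} (h1 : π / 3 < x) (h2 : x < 5 * π / 3) : cos x < 1 / 2 := by
  rw [← cos_pi_div_three]
  rcases le_or_gt x π with h | h
  · exact cos_lt_cos_of_nonneg_of_le_pi (by positivity) h h1
  · rw [← cos_two_pi_sub]
    exact cos_lt_cos_of_nonneg_of_le_pi (by positivity) (by linarith) (by linarith)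

theorem exists_coprime_six_mul_mem_Ioo {n : ℕ} (h3 : 3 ≤ n) (h6 : n ≠ 6) :
    ∃ k, k.Coprime n ∧ 6 * k ∈ Set.Ioo n (5 * n) := by
  obtain ⟨t, rfl | rfl⟩ := Nat.even_or_odd' n
  · obtain ⟨s, rfl | rfl⟩ := Nat.even_or_odd' t
    · refine ⟨2 * s + 1, Nat.isCoprime_iff_coprime.1 ⟨2 * s + 1, -(s + 1), ?_⟩, by omega,
        by omega⟩
      push_cast
      ring
    · refine ⟨2 * s + 3, Nat.isCoprime_iff_coprime.1 ?_, by omega, by omega⟩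
      push_cast
      exact IsCoprime.mul_right ⟨1, -(s + 1), by ring⟩ ⟨-s, s + 1, by ring⟩
  · refine ⟨t, Nat.isCoprime_iff_coprime.1 ⟨-2, 1, ?_⟩, by omega, by omega⟩
    push_cast
    ring

theorem exists_isPrimitiveRoot_re_lt_one_half {n : ℕ} (h3 : 3 ≤ n) (h6 : n ≠ 6) :
    ∃ ζ : ℂ, IsPrimitiveRoot ζ n ∧ ζ.re < 1 / 2 := by
  obtain ⟨k, hk, hlo, hhi⟩ := exists_coprime_six_mul_mem_Ioo h3 h6
  have hn : (0 : ℝ) < n := by exact_mod_cast (by omega : 0 < n)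
  have hlo' : (n : ℝ) < 6 * k := by exact_mod_cast hlo
  have hhi' : (6 * k : ℝ) < 5 * n := by exact_mod_cast hhi
  refine ⟨_, Complex.isPrimitiveRoot_exp_of_coprime k n (by omega) hk, ?_⟩
  have hre : (Complex.exp (2 * π * Complex.I * (k / n))).re = cos (2 * π * k / n) := by
    simp [Complex.exp_re, mul_div_assoc]
  rw [hre]
  apply cos_lt_one_half
  · rw [lt_div_iff₀ hn]; nlinarith [pi_pos]
  · rw [div_lt_iff₀ hn]; nlinarith [pi_pos]

section Cube

variable {d : ℕ}

def cubeVertex (b : Fin d → Bool) : EuclideanSpace ℝ (Fin d) :=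
  WithLp.toLp 2 fun i => if b i then 1 else 0

theorem cubeVertex_injective : Function.Injective (cubeVertex (d := d)) := fun b b' h =>
  funext fun i => by
    have hi : (if b i then (1 : ℝ) else 0) = if b' i then 1 else 0 :=
      congrArg (fun x : EuclideanSpace ℝ (Fin d) => x i) h
    revert hi
    cases b i <;> cases b' i <;> norm_num

theorem dist_cubeVertex (b b' : Fin d → Bool) :
    dist (cubeVertex b) (cubeVertex b') = √(hammingDist b b') := by
  rw [EuclideanSpace.dist_eq, hammingDist, Finset.natCast_card_filter]
  congr 1
  refine Finset.sum_congr rfl fun i _ => ?_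
  cases hb : b i <;> cases hb' : b' i <;> simp [cubeVertex, hb, hb', Real.dist_eq]

theorem dist_cubeVertex_center (b : Fin d → Bool) :
    dist (cubeVertex b) (WithLp.toLp 2 fun _ => 1 / 2) = √d / 2 := by
  have hcoord : ∀ i, dist (cubeVertex b i) (1 / 2) ^ 2 = 1 / 4 := fun i => by
    cases hb : b i <;> norm_num [cubeVertex, hb, Real.dist_eq]
  rw [EuclideanSpace.dist_eq]
  simp only [hcoord]
  rw [Finset.sum_const, Finset.card_univ, Fintype.card_fin, nsmul_eq_mul,
    Real.sqrt_mul' _ (by norm_num), show (1 / 4 : ℝ) = (1 / 2) ^ 2 by norm_num,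
    Real.sqrt_sq (by norm_num)]
  ring

end Cube

section Cycle

variable {n : ℕ} [NeZero n]

theorem cycleGraph_adj_add_one (hn : 1 < n) (j : Fin n) : (cycleGraph n).Adj j (j + 1) := by
  rw [cycleGraph_adj', add_sub_cancel_left, Fin.val_one', Nat.mod_eq_of_lt hn]
  exact Or.inr rfl

theorem dist_eq_one_of_cycleGraph_adj {X : Type*} [PseudoMetricSpace X] {f : Fin n → X}
    (hstep : ∀ j, dist (f (j + 1)) (f j) = 1) ⦃u v : Fin n⦄ (h : (cycleGraph n).Adj u v) :
    dist (f u) (f v) = 1 := by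
  have hsucc : ∀ a b : Fin n, (a - b).val = 1 → a = b + 1 := fun a b hab => by
    rw [← sub_eq_iff_eq_add', Fin.ext_iff, hab, Fin.val_one',
      Nat.mod_eq_of_lt (hab ▸ (a - b).isLt)]
  rcases cycleGraph_adj'.1 h with h | h
  · rw [hsucc u v h]; exact hstep v
  · rw [hsucc v u h, dist_comm]; exact hstep u

theorem pow_val_add_one {M : Type*} [Monoid M] {ζ : M} (hζ : ζ ^ n = 1) (j : Fin n) :
    ζ ^ (j + 1 : Fin n).val = ζ ^ j.val * ζ := by
  rw [Fin.val_add, ← pow_eq_pow_mod _ hζ, pow_add, Fin.val_one', ← pow_eq_pow_mod _ hζ,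
    pow_one]

theorem exists_isPrimitiveRoot_of_cycle_on_circle (hn : 3 ≤ n) {u : Fin n → ℂ}
    (hu : Function.Injective u) {r : ℝ} (hr : 0 < r) (hnorm : ∀ j, ‖u j‖ = r)
    (hstep : ∀ j, ‖u (j + 1) - u j‖ = 1) :
    ∃ ζ : ℂ, IsPrimitiveRoot ζ n ∧ ζ.re = 1 - 1 / (2 * r ^ 2) := by
  have hu0 : ∀ j, u j ≠ 0 := fun j => norm_pos_iff.1 (hnorm j ▸ hr)
  set q : Fin n → ℂ := fun j => u (j + 1) / u j with hq
  have hq_norm : ∀ j, ‖q j‖ = 1 := fun j => by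
    rw [hq, norm_div, hnorm, hnorm, div_self hr.ne']
  have hq_re : ∀ j, (q j).re = 1 - 1 / (2 * r ^ 2) := fun j =>
    Complex.re_div_of_norm_sub_eq_one hr (hnorm j) (hnorm _) (hstep j)
  -- `u j` and `u (j + 2)` are distinct, so they are the two conjugate rotations of `u (j + 1)`.
  have hq_succ : ∀ j, q (j + 1) = q j := fun j => by
    have hback : (u j / u (j + 1)).re = 1 - 1 / (2 * r ^ 2) := by
      refine Complex.re_div_of_norm_sub_eq_one hr (hnorm _) (hnorm j) ?_
      rw [← norm_neg, neg_sub, hstep]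
    have hne : u j / u (j + 1) ≠ q (j + 1) := fun h => by
      have h2 : j + 1 + 1 ≠ j := by
        rw [add_assoc, Ne, add_eq_left, Fin.ext_iff, Fin.val_add, Fin.val_one', Fin.val_zero,
          Nat.mod_eq_of_lt (by omega : 1 < n), Nat.mod_eq_of_lt (by omega : 1 + 1 < n)]
        norm_num
      exact h2 (hu ((div_left_inj' (hu0 (j + 1))).1 h).symm)
    have hconj := (Complex.eq_or_eq_conj_of_norm_eq_of_re_eq
      (by rw [norm_div, hnorm, hnorm, hq_norm, div_self hr.ne'])
      (hback.trans (hq_re _).symm)).resolve_left hne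
    rw [← Complex.inv_eq_conj (hq_norm _), hq, inv_div] at hconj
    simpa only [inv_div] using congrArg (·⁻¹) hconj.symm
  have hq_const : ∀ j, q j = q 0 := by
    have hq_nat : ∀ m : ℕ, q (m : Fin n) = q 0 := fun m => by
      induction m with
      | zero => rw [Nat.cast_zero]
      | succ m ih => rw [Nat.cast_succ, hq_succ, ih]
    exact fun j => Fin.cast_val_eq_self j ▸ hq_nat j
  have hu_succ : ∀ j, u (j + 1) = q 0 * u j := fun j => by
    rw [← hq_const j]
    exact (div_mul_cancel₀ _ (hu0 j)).symm
  have hu_pow : ∀ m : ℕ, u (m : Fin n) = q 0 ^ m * u 0 := fun m => by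
    induction m with
    | zero => rw [Nat.cast_zero, pow_zero, one_mul]
    | succ m ih => rw [Nat.cast_succ, hu_succ, ih, pow_succ', mul_assoc]
  refine ⟨q 0, IsPrimitiveRoot.mk_of_lt _ (Nat.pos_of_neZero n) ?_ fun l hl0 hln hl => ?_,
    hq_re 0⟩
  · have h := hu_pow n
    rw [Fin.natCast_self] at h
    exact mul_right_cancel₀ (hu0 0) (h.symm.trans (one_mul _).symm)
  · have h := hu_pow l
    rw [hl, one_mul, ← Nat.cast_zero] at h
    exact Nat.not_dvd_of_pos_of_lt hl0 hln (Fin.natCast_eq_zero.1 (hu h))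

theorem hasSphericalEmbeddingRadius_cycleGraph_of_isPrimitiveRoot {ζ : ℂ}
    (hζ : IsPrimitiveRoot ζ n) (hζ1 : ζ ≠ 1) :
    HasSphericalEmbeddingRadius (cycleGraph n) 2 ‖ζ - 1‖⁻¹ := by
  have hζnorm := hζ.norm'_eq_one (NeZero.ne n)
  have hρ : ‖ζ - 1‖ ≠ 0 := norm_ne_zero_iff.2 (sub_ne_zero.2 hζ1)
  refine hasSphericalEmbeddingRadius_of_isometry Complex.orthonormalBasisOneI.repr.isometry
    (f := fun j : Fin n => (‖ζ - 1‖⁻¹ : ℂ) * ζ ^ j.val) (c := 0) (fun i j h => ?_)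
    (dist_eq_one_of_cycleGraph_adj fun j => ?_) fun j => ?_
  · exact Fin.ext (hζ.pow_inj i.isLt j.isLt (mul_left_cancel₀ (by simpa using hρ) h))
  · rw [dist_eq_norm, pow_val_add_one hζ.pow_eq_one, ← mul_sub, ← mul_sub_one, norm_mul,
      norm_mul, norm_pow, hζnorm, one_pow, one_mul, norm_inv, Complex.norm_real, norm_norm,
      inv_mul_cancel₀ hρ]
  · rw [dist_zero_right, norm_mul, norm_pow, hζnorm, one_pow, mul_one, norm_inv,
      Complex.norm_real, norm_norm]

theorem hasSphericalEmbedding_cycleGraph_of_isPrimitiveRoot {ζ : ℂ} (hζ : IsPrimitiveRoot ζ n)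
    (hre : ζ.re < 1 / 2) : HasSphericalEmbedding (cycleGraph n) 2 := by
  have hζ1 : ζ ≠ 1 := by rintro rfl; norm_num at hre
  have hsq := Complex.norm_sub_one_sq_of_norm_eq_one (hζ.norm'_eq_one (NeZero.ne n))
  have hρ : 1 < ‖ζ - 1‖ := by nlinarith [norm_nonneg (ζ - 1)]
  exact ⟨_, by positivity, inv_lt_one_of_one_lt₀ hρ,
    hasSphericalEmbeddingRadius_cycleGraph_of_isPrimitiveRoot hζ hζ1⟩

theorem exists_isPrimitiveRoot_of_hasSphericalEmbeddingRadius (hn : 3 ≤ n) {r : ℝ} (hr : 0 < r)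
    (h : HasSphericalEmbeddingRadius (cycleGraph n) 2 r) :
    ∃ ζ : ℂ, IsPrimitiveRoot ζ n ∧ ζ.re = 1 - 1 / (2 * r ^ 2) := by
  obtain ⟨f, ⟨hf, hadj, -⟩, c, hc⟩ := h
  set e := Complex.orthonormalBasisOneI.repr.symm
  refine exists_isPrimitiveRoot_of_cycle_on_circle hn (u := fun j => e (f j) - e c)
    ((sub_left_injective).comp (e.injective.comp hf)) hr (fun j => ?_) fun j => ?_
  · rw [← dist_eq_norm, e.dist_map, hc]
  · rw [sub_sub_sub_cancel_right, ← dist_eq_norm, e.dist_map, dist_comm]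
    exact hadj (cycleGraph_adj_add_one (by omega) j)

end Cycle

def cubeHexagon : Fin 6 → Fin 3 → Bool :=
  ![![true, false, false], ![true, true, false], ![false, true, false],
    ![false, true, true], ![false, false, true], ![true, false, true]]

theorem hasSphericalEmbedding_cycleGraph_six_three : HasSphericalEmbedding (cycleGraph 6) 3 := by
  have hsqrt : √3 < 2 := (Real.sqrt_lt' two_pos).2 (by norm_num)
  refine ⟨√3 / 2, by positivity, by linarith,
    hasSphericalEmbeddingRadius_of_isometry isometry_id
    (cubeVertex_injective.comp (by decide : Function.Injective cubeHexagon))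
    (dist_eq_one_of_cycleGraph_adj fun j => ?_) (c := WithLp.toLp 2 fun _ => 1 / 2)
    fun j => ?_⟩
  · have hstep : hammingDist (cubeHexagon (j + 1)) (cubeHexagon j) = 1 := by
      revert j
      decide
    rw [Function.comp_apply, Function.comp_apply, dist_cubeVertex, hstep, Nat.cast_one,
      Real.sqrt_one]
  · rw [Function.comp_apply, dist_cubeVertex_center, Nat.cast_ofNat]

theorem not_hasSphericalEmbedding_cycleGraph_six_two :
    ¬ HasSphericalEmbedding (cycleGraph 6) 2 := by
  rintro ⟨r, hr0, hr1, h⟩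
  obtain ⟨ζ, hζ, hre⟩ :=
    exists_isPrimitiveRoot_of_hasSphericalEmbeddingRadius (by norm_num) hr0 h
  rw [hζ.re_eq_one_half_of_six] at hre
  have hr2 : r ^ 2 = 1 := by
    field_simp at hre
    linarith
  nlinarith

/-- For every `n ≥ 3` with `n ≠ 6`, the cycle `Cₙ` has spherical dimension 2,
while `C₆` has spherical dimension 3. -/
theorem stmt10 :
    (∀ n : ℕ, 3 ≤ n → n ≠ 6 → sphericalDim (SimpleGraph.cycleGraph n) = 2) ∧
    sphericalDim (SimpleGraph.cycleGraph 6) = 3 := by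
  refine ⟨fun n h3 h6 => ?_, ?_⟩
  · have : NeZero n := ⟨by omega⟩
    obtain ⟨ζ, hζ, hre⟩ := exists_isPrimitiveRoot_re_lt_one_half h3 h6
    refine sphericalDim_eq_of_hasSphericalEmbedding (by rw [Fintype.card_fin]; omega)
      (hasSphericalEmbedding_cycleGraph_of_isPrimitiveRoot hζ hre) fun m hm => ?_
    exact not_hasSphericalEmbedding_of_le_one (by rw [Fintype.card_fin]; omega) (by omega)
  · refine sphericalDim_eq_of_hasSphericalEmbedding (by simp)
      hasSphericalEmbedding_cycleGraph_six_three fun m hm => ?_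
    rcases Nat.lt_succ_iff_lt_or_eq.1 hm with hm | rfl
    · exact not_hasSphericalEmbedding_of_le_one (by simp) (by omega)
    · exact not_hasSphericalEmbedding_cycleGraph_six_two
end

section
/- Let X be a finite subset of ℝ^{n+m} contained in a sphere S = {x ∈ A : ‖x − c‖ = r} with 0 < r < 1, where A is an n-dimensional affine subspace with c ∈ A and the affine hull of X equals A. Let p ∈ ℝ^{n+m} be any point with ‖p − x‖ = 1 for every x ∈ X (such a point exists when m ≥ 1). Then X ∪ {p} is contained in a sphere of radius 1/(2√(1 − r²)) lying in an (n+1)-dimensional affine subspace of ℝ^{n+m}, and this sphere is the unique sphere contained in an (n+1)-dimensional affine subspace that contains X ∪ {p}. -/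
/-! A point equidistant from all of `X` differs from `c` by a vector orthogonal to the direction
of `A = affineSpan X`. So `p - c ⟂ A`, Pythagoras gives `‖p - c‖² = 1 - r²`, and the affine span
`B` of `A ∪ {p}` has dimension `n + 1`. The centre of a sphere in `B` through `X ∪ {p}` lies on the
line `c + τ (p - c)`, where its squared distances to `X` and to `p` are `r² + τ² (1 - r²)` and
`(1 - τ)² (1 - r²)`; equating them fixes `τ` and the radius `1 / (2 √(1 - r²))`. Any
`(n + 1)`-dimensional subspace through `X ∪ {p}` contains `B`, hence equals it. -/

open EuclideanGeometry AffineMap Module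
open scoped RealInnerProductSpace

theorem Submodule.sup_inf_orthogonal_of_le {V : Type*} [NormedAddCommGroup V]
    [InnerProductSpace ℝ V] {K L : Submodule ℝ V} (h : L ≤ Kᗮ) : (L ⊔ K) ⊓ Kᗮ = L := by
  rw [sup_inf_assoc_of_le K h, K.inf_orthogonal_eq_bot, sup_bot_eq]

theorem AffineSubspace.finrank_direction_affineSpan_insert {k V P : Type*} [DivisionRing k]
    [AddCommGroup V] [Module k V] [Module.Finite k V] [AddTorsor V P] {A : AffineSubspace k P}
    {c p : P} (hc : c ∈ A) (hp : p ∉ A) :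
    finrank k (affineSpan k (insert p (A : Set P))).direction = finrank k A.direction + 1 := by
  rw [direction_affineSpan_insert hc, sup_comm,
    Submodule.finrank_sup_span_singleton (by rwa [vsub_right_mem_direction_iff_mem hc])]

theorem AffineSubspace.eq_of_le_of_finrank_direction_eq {k V P : Type*} [DivisionRing k]
    [AddCommGroup V] [Module k V] [AddTorsor V P] {s₁ s₂ : AffineSubspace k P}
    [FiniteDimensional k s₂.direction] (hle : s₁ ≤ s₂) (hn : (s₁ : Set P).Nonempty)
    (hd : finrank k s₁.direction = finrank k s₂.direction) : s₁ = s₂ :=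
  eq_of_direction_eq_of_nonempty_of_le
    (Submodule.eq_of_le_of_finrank_eq (direction_le hle) hd) hn hle

theorem sq_add_sq_mul_eq_and_sq_mul_eq_iff {r τ ρ : ℝ} (hr : r ^ 2 < 1) (hρ : 0 ≤ ρ) :
    (r ^ 2 + τ ^ 2 * (1 - r ^ 2) = ρ ^ 2 ∧ (1 - τ) ^ 2 * (1 - r ^ 2) = ρ ^ 2) ↔
      τ = (1 - 2 * r ^ 2) / (2 * (1 - r ^ 2)) ∧ ρ = 1 / (2 * √(1 - r ^ 2)) := by
  have hs : 0 < 1 - r ^ 2 := by linarith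
  have hR : (1 / (2 * √(1 - r ^ 2))) ^ 2 = 1 / (4 * (1 - r ^ 2)) := by
    rw [div_pow, mul_pow, Real.sq_sqrt hs.le]; norm_num
  rw [← sq_eq_sq₀ hρ (by positivity), hR]
  constructor
  · rintro ⟨h₁, h₂⟩
    have hτ : τ = (1 - 2 * r ^ 2) / (2 * (1 - r ^ 2)) := by
      field_simp
      nlinarith
    refine ⟨hτ, ?_⟩
    rw [← h₂, hτ]
    field_simp
    ring
  · rintro ⟨rfl, h⟩
    rw [h]
    constructor <;> field_simp <;> ring

section Euclidean

variable {V P : Type*} [NormedAddCommGroup V] [InnerProductSpace ℝ V] [MetricSpace P]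
  [NormedAddTorsor V P]

theorem vsub_mem_orthogonal_vectorSpan_of_forall_dist_eq {s : Set P} {c₁ c₂ : P} {r₁ r₂ : ℝ}
    (h₁ : ∀ x ∈ s, dist x c₁ = r₁) (h₂ : ∀ x ∈ s, dist x c₂ = r₂) :
    c₂ -ᵥ c₁ ∈ (vectorSpan ℝ s)ᗮ := by
  rw [Submodule.mem_orthogonal', vectorSpan_def]
  intro w hw
  induction hw using Submodule.span_induction with
  | mem w hw =>
    obtain ⟨x, hx, y, hy, rfl⟩ := hw
    exact inner_vsub_vsub_of_dist_eq_of_dist_eq (by rw [h₁ x hx, h₁ y hy])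
      (by rw [h₂ x hx, h₂ y hy])
  | zero => exact inner_zero_right _
  | add u w _ _ hu hw => rw [inner_add_right, hu, hw, add_zero]
  | smul a w _ hw => rw [inner_smul_right, hw, mul_zero]

theorem dist_lineMap_sq_of_inner_eq_zero {x c p : P} (h : ⟪x -ᵥ c, p -ᵥ c⟫ = 0) (τ : ℝ) :
    dist x (lineMap c p τ) ^ 2 = dist x c ^ 2 + τ ^ 2 * dist c p ^ 2 := by
  rw [lineMap_apply, dist_eq_norm_vsub V, vsub_vadd_eq_vsub_sub, norm_sub_sq_real,
    inner_smul_right, h, norm_smul, mul_pow, Real.norm_eq_abs, sq_abs, dist_eq_norm_vsub V x c,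
    dist_eq_norm_vsub' V]
  ring

theorem exists_eq_lineMap_of_mem_affineSpan_insert {A : AffineSubspace ℝ P} {c p q : P}
    (hc : c ∈ A) (hp : p -ᵥ c ∈ A.directionᗮ)
    (hq : q ∈ affineSpan ℝ (insert p (A : Set P))) (hqc : q -ᵥ c ∈ A.directionᗮ) :
    ∃ τ : ℝ, q = lineMap c p τ := by
  have hqB : q -ᵥ c ∈ (ℝ ∙ (p -ᵥ c) ⊔ A.direction) ⊓ A.directionᗮ := by
    refine ⟨?_, hqc⟩
    rw [← AffineSubspace.direction_affineSpan_insert hc]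
    exact AffineSubspace.vsub_mem_direction hq
      (subset_affineSpan ℝ _ (Set.mem_insert_of_mem _ hc))
  rw [Submodule.sup_inf_orthogonal_of_le (Submodule.span_singleton_le_iff_mem _ _ |>.2 hp),
    Submodule.mem_span_singleton] at hqB
  obtain ⟨τ, hτ⟩ := hqB
  exact ⟨τ, by rw [lineMap_apply, hτ, vsub_vadd]⟩

theorem vsub_mem_direction_orthogonal_of_forall_dist_eq {A : AffineSubspace ℝ P} {X : Set P}
    {c q : P} {r ρ : ℝ} (hspan : affineSpan ℝ X = A) (hX : ∀ x ∈ X, dist x c = r)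
    (hq : ∀ x ∈ X, dist x q = ρ) : q -ᵥ c ∈ A.directionᗮ := by
  rw [← hspan, direction_affineSpan]
  exact vsub_mem_orthogonal_vectorSpan_of_forall_dist_eq hX hq

theorem forall_dist_lineMap_eq_iff {A : AffineSubspace ℝ P} {X : Set P} {c p : P} {r : ℝ}
    (hc : c ∈ A) (hX : ∀ x ∈ X, x ∈ A ∧ dist x c = r) (hspan : affineSpan ℝ X = A)
    (hr : r < 1) (hp : ∀ x ∈ X, dist x p = 1) (τ ρ : ℝ) :
    (∀ x ∈ X ∪ {p}, dist x (lineMap c p τ) = ρ) ↔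
      τ = (1 - 2 * r ^ 2) / (2 * (1 - r ^ 2)) ∧ ρ = 1 / (2 * √(1 - r ^ 2)) := by
  obtain ⟨x₀, hx₀⟩ : X.Nonempty := (affineSpan_nonempty ℝ).1 ⟨c, hspan ▸ hc⟩
  have hr0 : 0 ≤ r := (hX x₀ hx₀).2 ▸ dist_nonneg
  replace hr : r ^ 2 < 1 := by nlinarith
  have hpc := vsub_mem_direction_orthogonal_of_forall_dist_eq hspan (fun x hx => (hX x hx).2) hp
  have hX_sq (x) (hx : x ∈ X) (τ : ℝ) :
      dist x (lineMap c p τ) ^ 2 = r ^ 2 + τ ^ 2 * dist c p ^ 2 := by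
    rw [dist_lineMap_sq_of_inner_eq_zero (Submodule.inner_right_of_mem_orthogonal
      (AffineSubspace.vsub_mem_direction (hX x hx).1 hc) hpc), (hX x hx).2]
  have hcp : dist c p ^ 2 = 1 - r ^ 2 := by
    have h := hX_sq x₀ hx₀ 1
    rw [lineMap_apply_one, hp x₀ hx₀] at h
    linarith
  have hp_sq : dist p (lineMap c p τ) ^ 2 = (1 - τ) ^ 2 * (1 - r ^ 2) := by
    rw [dist_comm, dist_lineMap_right, mul_pow, Real.norm_eq_abs, sq_abs, hcp]
  have hR : 0 ≤ 1 / (2 * √(1 - r ^ 2)) := by positivity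
  constructor
  · intro h
    refine (sq_add_sq_mul_eq_and_sq_mul_eq_iff hr (h p (Or.inr rfl) ▸ dist_nonneg)).1 ⟨?_, ?_⟩
    · rw [← hcp, ← hX_sq x₀ hx₀, h x₀ (Or.inl hx₀)]
    · rw [← hp_sq, h p (Or.inr rfl)]
  · rintro ⟨rfl, rfl⟩
    obtain ⟨hX_eq, hp_eq⟩ := (sq_add_sq_mul_eq_and_sq_mul_eq_iff hr hR).2 ⟨rfl, rfl⟩
    rintro x (hx | rfl)
    · rw [← sq_eq_sq₀ dist_nonneg hR, hX_sq x hx, hcp, hX_eq]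
    · rw [← sq_eq_sq₀ dist_nonneg hR, hp_sq, hp_eq]

end Euclidean

theorem stmt12_general {n m : ℕ} (X : Set (EuclideanSpace ℝ (Fin (n + m))))
    (A : AffineSubspace ℝ (EuclideanSpace ℝ (Fin (n + m))))
    (c : EuclideanSpace ℝ (Fin (n + m))) (hc : c ∈ A)
    (hdim : Module.finrank ℝ A.direction = n)
    (r : ℝ) (hr1 : r < 1) (hX : ∀ x ∈ X, x ∈ A ∧ dist x c = r)
    (hspan : affineSpan ℝ X = A)
    (p : EuclideanSpace ℝ (Fin (n + m))) (hp : ∀ x ∈ X, dist p x = 1) :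
    ∃ (B : AffineSubspace ℝ (EuclideanSpace ℝ (Fin (n + m))))
      (c' : EuclideanSpace ℝ (Fin (n + m))),
      c' ∈ B ∧ Module.finrank ℝ B.direction = n + 1 ∧
      (∀ x ∈ X ∪ {p}, x ∈ B ∧ dist x c' = 1 / (2 * Real.sqrt (1 - r ^ 2))) ∧
      ∀ (B' : AffineSubspace ℝ (EuclideanSpace ℝ (Fin (n + m))))
        (c'' : EuclideanSpace ℝ (Fin (n + m))) (ρ : ℝ),
        c'' ∈ B' → Module.finrank ℝ B'.direction = n + 1 →
        (∀ x ∈ X ∪ {p}, x ∈ B' ∧ dist x c'' = ρ) →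
        {x | x ∈ B' ∧ dist x c'' = ρ} =
          {x | x ∈ B ∧ dist x c' = 1 / (2 * Real.sqrt (1 - r ^ 2))} := by
  obtain ⟨x₀, hx₀⟩ : X.Nonempty := (affineSpan_nonempty ℝ).1 ⟨c, hspan ▸ hc⟩
  have hXc : ∀ x ∈ X, dist x c = r := fun x hx => (hX x hx).2
  have hXp : ∀ x ∈ X, dist x p = 1 := fun x hx => dist_comm x p ▸ hp x hx
  have hpc := vsub_mem_direction_orthogonal_of_forall_dist_eq hspan hXc hXp
  have hpA : p ∉ A := fun hpA => hr1.ne <| by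
    obtain rfl : p = c := vsub_eq_zero_iff_eq.1 <| Submodule.disjoint_def.1
      A.direction.orthogonal_disjoint _ (AffineSubspace.vsub_mem_direction hpA hc) hpc
    rw [← hXc x₀ hx₀, ← hp x₀ hx₀, dist_comm]
  set B := affineSpan ℝ (insert p (A : Set (EuclideanSpace ℝ (Fin (n + m)))))
  have hsub : X ∪ {p} ⊆ B := Set.union_subset
    (fun x hx => subset_affineSpan ℝ _ (Set.mem_insert_of_mem _ (hX x hx).1))
    (Set.singleton_subset_iff.2 (subset_affineSpan ℝ _ (Set.mem_insert _ _)))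
  have hBrank : finrank ℝ B.direction = n + 1 := by
    rw [AffineSubspace.finrank_direction_affineSpan_insert hc hpA, hdim]
  have hsphere := forall_dist_lineMap_eq_iff hc hX hspan hr1 hXp
  refine ⟨B, lineMap c p ((1 - 2 * r ^ 2) / (2 * (1 - r ^ 2))),
    AffineMap.lineMap_mem _ (subset_affineSpan ℝ _ (Set.mem_insert_of_mem _ hc))
      (hsub (Or.inr rfl)), hBrank,
    fun x hx => ⟨hsub hx, (hsphere _ _).2 ⟨rfl, rfl⟩ x hx⟩, ?_⟩
  intro B' c'' ρ hc'' hB'rank hall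
  obtain rfl : B = B' := AffineSubspace.eq_of_le_of_finrank_direction_eq
    (affineSpan_le.2 (Set.insert_subset (hall p (Or.inr rfl)).1
      (hspan ▸ affineSpan_le.2 fun x hx => (hall x (Or.inl hx)).1)))
    ⟨p, hsub (Or.inr rfl)⟩ (hBrank.trans hB'rank.symm)
  obtain ⟨τ, rfl⟩ := exists_eq_lineMap_of_mem_affineSpan_insert hc hpc hc''
    (vsub_mem_direction_orthogonal_of_forall_dist_eq hspan hXc fun x hx => (hall x (Or.inl hx)).2)
  obtain ⟨rfl, rfl⟩ := (hsphere τ ρ).1 fun x hx => (hall x hx).2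
  rfl

/-- If a finite set `X ⊆ ℝ^{n+m}` lies on the sphere of radius `0 < r < 1`
centered at `c` in an `n`-dimensional affine subspace `A` which is the affine hull of `X`,
and `p` is at distance 1 from every point of `X`, then `X ∪ {p}` lies on a sphere of radius
`1/(2√(1-r²))` in an `(n+1)`-dimensional affine subspace, and this sphere is the unique
sphere in an `(n+1)`-dimensional affine subspace containing `X ∪ {p}`. -/
theorem stmt12 {n m : ℕ} (X : Set (EuclideanSpace ℝ (Fin (n + m)))) (hXfin : X.Finite)
    (A : AffineSubspace ℝ (EuclideanSpace ℝ (Fin (n + m))))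
    (c : EuclideanSpace ℝ (Fin (n + m))) (hc : c ∈ A)
    (hdim : Module.finrank ℝ A.direction = n)
    (r : ℝ) (hr0 : 0 < r) (hr1 : r < 1) (hX : ∀ x ∈ X, x ∈ A ∧ dist x c = r)
    (hspan : affineSpan ℝ X = A)
    (p : EuclideanSpace ℝ (Fin (n + m))) (hp : ∀ x ∈ X, dist p x = 1) :
    ∃ (B : AffineSubspace ℝ (EuclideanSpace ℝ (Fin (n + m))))
      (c' : EuclideanSpace ℝ (Fin (n + m))),
      c' ∈ B ∧ Module.finrank ℝ B.direction = n + 1 ∧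
      (∀ x ∈ X ∪ {p}, x ∈ B ∧ dist x c' = 1 / (2 * Real.sqrt (1 - r ^ 2))) ∧
      ∀ (B' : AffineSubspace ℝ (EuclideanSpace ℝ (Fin (n + m))))
        (c'' : EuclideanSpace ℝ (Fin (n + m))) (ρ : ℝ),
        c'' ∈ B' → Module.finrank ℝ B'.direction = n + 1 →
        (∀ x ∈ X ∪ {p}, x ∈ B' ∧ dist x c'' = ρ) →
        {x | x ∈ B' ∧ dist x c'' = ρ} =
          {x | x ∈ B ∧ dist x c' = 1 / (2 * Real.sqrt (1 - r ^ 2))} :=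
  stmt12_general X A c hc hdim r hr1 hX hspan p hp
end

section
/- Let G be a finite simple graph on n ≥ 4 vertices. Suppose that for every set of four vertices of G, the induced subgraph of G on those four vertices contains K_{3,1} as a subgraph (equivalently, one of the four vertices is adjacent in G to the other three). Then G contains K_{n−3} + ε_3 as a subgraph, i.e., there are three vertices v₁, v₂, v₃ of G such that every pair of vertices of G not both among {v₁, v₂, v₃} is adjacent (in particular the remaining n − 3 vertices form a clique, each adjacent to v₁, v₂, and v₃). -/
/-- If `G` is a finite simple graph on `n ≥ 4` vertices in which, among any
four distinct vertices, one is adjacent to the other three, then there are three vertices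
`v₁, v₂, v₃` such that any two distinct vertices not both among `{v₁, v₂, v₃}` are adjacent
(i.e. `G` contains `K_{n-3} + ε₃` as a subgraph). -/
theorem stmt18 {V : Type} [Fintype V] (G : SimpleGraph V) (hn : 4 ≤ Fintype.card V)
    (h : ∀ a b c d : V, a ≠ b → a ≠ c → a ≠ d → b ≠ c → b ≠ d → c ≠ d →
      (G.Adj a b ∧ G.Adj a c ∧ G.Adj a d) ∨
      (G.Adj b a ∧ G.Adj b c ∧ G.Adj b d) ∨
      (G.Adj c a ∧ G.Adj c b ∧ G.Adj c d) ∨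
      (G.Adj d a ∧ G.Adj d b ∧ G.Adj d c)) :
    ∃ v₁ v₂ v₃ : V, v₁ ≠ v₂ ∧ v₁ ≠ v₃ ∧ v₂ ≠ v₃ ∧
      ∀ x y : V, x ≠ y → (x ∉ ({v₁, v₂, v₃} : Set V) ∨ y ∉ ({v₁, v₂, v₃} : Set V)) →
        G.Adj x y := by
  classical
  -- no two disjoint non-edges
  have hdisj : ∀ a b c d : V, a ≠ b → c ≠ d → a ≠ c → a ≠ d → b ≠ c → b ≠ d →
      ¬G.Adj a b → ¬G.Adj c d → False := by
    intro a b c d hab hcd hac had hbc hbd h1 h2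
    rcases h a b c d hab hac had hbc hbd hcd with ⟨h', _⟩ | ⟨h', _⟩ | ⟨_, _, h'⟩ | ⟨_, _, h'⟩
    · exact h1 h'
    · exact h1 h'.symm
    · exact h2 h'
    · exact h2 h'.symm
  -- no vertex has three non-neighbors
  have hstar : ∀ v a b c : V, v ≠ a → v ≠ b → v ≠ c → a ≠ b → a ≠ c → b ≠ c →
      ¬G.Adj v a → ¬G.Adj v b → ¬G.Adj v c → False := by
    intro v a b c hva hvb hvc hab hac hbc h1 h2 h3
    rcases h v a b c hva hvb hvc hab hac hbc with
      ⟨h', _, _⟩ | ⟨h', _, _⟩ | ⟨h', _, _⟩ | ⟨h', _, _⟩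
    · exact h1 h'
    · exact h1 h'.symm
    · exact h2 h'.symm
    · exact h3 h'.symm
  -- a third vertex always exists
  have third : ∀ a b : V, ∃ c : V, c ≠ a ∧ c ≠ b := by
    intro a b
    have hns : ¬(Finset.univ : Finset V) ⊆ {a, b} := by
      intro hs
      have h1 := Finset.card_le_card hs
      have h2 : ({a, b} : Finset V).card ≤ 2 :=
        le_trans (Finset.card_insert_le _ _) (by simp)
      rw [Finset.card_univ] at h1
      omega
    obtain ⟨c, -, hc⟩ := Finset.not_subset.mp hns
    simp only [Finset.mem_insert, Finset.mem_singleton, not_or] at hc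
    exact ⟨c, hc.1, hc.2⟩
  by_cases hall : ∀ x y : V, x ≠ y → G.Adj x y
  · -- G is complete: pick any three distinct vertices
    obtain ⟨a, b, hab⟩ := Fintype.exists_pair_of_one_lt_card (α := V) (by omega)
    obtain ⟨c, hca, hcb⟩ := third a b
    exact ⟨a, b, c, hab, Ne.symm hca, Ne.symm hcb, fun x y hxy _ => hall x y hxy⟩
  · push_neg at hall
    obtain ⟨a, b, hab, hnab⟩ := hall
    by_cases hex : ∃ x : V, x ≠ a ∧ x ≠ b ∧ (¬G.Adj a x ∨ ¬G.Adj b x)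
    · obtain ⟨c, hca, hcb, hcor⟩ := hex
      refine ⟨a, b, c, hab, Ne.symm hca, Ne.symm hcb, ?_⟩
      have key : ∀ x y : V, x ≠ y → ¬G.Adj x y → x ∉ ({a, b, c} : Set V) → False := by
        intro x y hxy hnxy hx
        simp only [Set.mem_insert_iff, Set.mem_singleton_iff, not_or] at hx
        obtain ⟨hxa, hxb, hxc⟩ := hx
        by_cases hya : y = a
        · subst hya
          rcases hcor with hac | hbc
          · exact hstar y b c x hab (Ne.symm hca) (Ne.symm hxa) hcb.symm (Ne.symm hxb)
              (Ne.symm hxc) hnab hac (fun hadj => hnxy hadj.symm)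
          · exact hdisj y x b c (Ne.symm hxa) (Ne.symm hcb) hab hca.symm hxb hxc
              (fun hadj => hnxy hadj.symm) hbc
        · by_cases hyb : y = b
          · subst hyb
            rcases hcor with hac | hbc
            · exact hdisj y x a c (Ne.symm hxb) (Ne.symm hca) hab.symm hcb.symm hxa hxc
                (fun hadj => hnxy hadj.symm) hac
            · exact hstar y a c x hab.symm (Ne.symm hcb) (Ne.symm hxb) hca.symm (Ne.symm hxa)
                (Ne.symm hxc) (fun hadj => hnab hadj.symm) hbc (fun hadj => hnxy hadj.symm)
          · exact hdisj a b x y hab hxy (Ne.symm hxa) (Ne.symm hya) (Ne.symm hxb)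
              (Ne.symm hyb) hnab hnxy
      intro x y hxy hmem
      by_contra hnadj
      rcases hmem with hx | hy
      · exact key x y hxy hnadj hx
      · exact key y x hxy.symm (fun hadj => hnadj hadj.symm) hy
    · push_neg at hex
      obtain ⟨c, hca, hcb⟩ := third a b
      refine ⟨a, b, c, hab, Ne.symm hca, Ne.symm hcb, ?_⟩
      have key : ∀ x y : V, x ≠ y → x ∉ ({a, b, c} : Set V) → G.Adj x y := by
        intro x y hxy hx
        simp only [Set.mem_insert_iff, Set.mem_singleton_iff, not_or] at hx
        obtain ⟨hxa, hxb, hxc⟩ := hx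
        by_cases hya : y = a
        · subst hya; exact ((hex x hxa hxb).1).symm
        · by_cases hyb : y = b
          · subst hyb; exact ((hex x hxa hxb).2).symm
          · by_contra hn
            exact hdisj a b x y hab hxy (Ne.symm hxa) (Ne.symm hya) (Ne.symm hxb)
              (Ne.symm hyb) hnab hn
      intro x y hxy hmem
      rcases hmem with hx | hy
      · exact key x y hxy hx
      · exact (key y x hxy.symm hy).symm
end
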